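/- (Proposition 'monotone'.) Let ρ, σ be density matrices on a finite-dimensional complex Hilbert space N and let T be a quantum operation from operators on N to operators on a finite-dimensional complex Hilbert space M. Then D(T(ρ), T(σ)) ≤ D(ρ, σ). -/

import Mathlib

open scoped ComplexOrder

noncomputable section

/-- The state space of `n` qubits: linear operators on `(ℂ²)^{⊗ n}`,
represented as matrices indexed by `Fin n → Fin 2`. -/
abbrev QState (n : ℕ) := Matrix (Fin n → Fin 2) (Fin n → Fin 2) ℂ

/-- A density matrix: Hermitian (implied), positive semidefinite, trace one. -/
def IsDensityMatrix {α : Type*} [Fintype α] (ρ : Matrix α α ℂ) : Prop :=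
  ρ.PosSemidef ∧ ρ.trace = 1

/-- The trace norm of a matrix: `tr √(Aᴴ A)`, the sum of the singular values. -/
noncomputable def traceNorm {α : Type*} [Fintype α] [DecidableEq α] (A : Matrix α α ℂ) : ℝ :=
  ((Matrix.posSemidef_conjTranspose_mul_self A).1.eigenvectorUnitary.1 *
    Matrix.diagonal (((↑) : ℝ → ℂ) ∘ (Real.sqrt ∘ (Matrix.posSemidef_conjTranspose_mul_self A).1.eigenvalues)) *
    (star (Matrix.posSemidef_conjTranspose_mul_self A).1.eigenvectorUnitary : Matrix α α ℂ)).trace.re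

/-- The trace distance `D(ρ,σ) = ‖ρ - σ‖_tr / 2`. -/
noncomputable def traceDist {α : Type*} [Fintype α] [DecidableEq α] (ρ σ : Matrix α α ℂ) : ℝ :=
  traceNorm (ρ - σ) / 2

/-- The extension `T ⊗ id_γ` of a linear map on matrices, acting blockwise. -/
def tensorIdMap {α β γ : Type*} (T : Matrix α α ℂ →ₗ[ℂ] Matrix β β ℂ)
    (M : Matrix (α × γ) (α × γ) ℂ) : Matrix (β × γ) (β × γ) ℂ :=
  Matrix.of fun p q => T (Matrix.of fun a a' => M (a, p.2) (a', q.2)) p.1 q.1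

/-- Complete positivity: all the extensions `T ⊗ id_m` preserve positive semidefiniteness. -/
def IsCompletelyPositive {α β : Type*} [Fintype α] [Fintype β]
    (T : Matrix α α ℂ →ₗ[ℂ] Matrix β β ℂ) : Prop :=
  ∀ (m : ℕ) (M : Matrix (α × Fin m) (α × Fin m) ℂ),
    M.PosSemidef → (tensorIdMap T M).PosSemidef

/-- A quantum operation: a trace-preserving, completely positive linear map. -/
def IsQuantumOp {α β : Type*} [Fintype α] [Fintype β]
    (T : Matrix α α ℂ →ₗ[ℂ] Matrix β β ℂ) : Prop :=
  (∀ M, (T M).trace = M.trace) ∧ IsCompletelyPositive T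

/-- The depolarizing channel at rate `η` on `d × d` matrices:
`ρ ↦ (1-η) ρ + (η tr ρ / dim) I`. -/
noncomputable def depolarize (η : ℝ) (d : Type*) [Fintype d] [DecidableEq d] :
    Matrix d d ℂ →ₗ[ℂ] Matrix d d ℂ :=
  (1 - η : ℂ) • LinearMap.id +
    (Matrix.traceLinearMap d ℂ ℂ).smulRight (((η : ℂ) / (Fintype.card d : ℂ)) • (1 : Matrix d d ℂ))

/-- Depolarization at rate `η` of the single qubit `i` of an `n`-qubit system. -/
noncomputable def depolarizeAt (η : ℝ) {n : ℕ} (i : Fin n) : QState n →ₗ[ℂ] QState n where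
  toFun ρ := Matrix.of fun x y =>
    (1 - η : ℂ) * ρ x y +
      (η : ℂ) * (if x i = y i then
        (2 : ℂ)⁻¹ * ∑ b : Fin 2, ρ (Function.update x i b) (Function.update y i b) else 0)
  map_add' ρ σ := by
    ext x y
    simp only [Matrix.of_apply, Matrix.add_apply]
    split
    · rw [Finset.sum_add_distrib]; ring
    · ring
  map_smul' c ρ := by
    ext x y
    simp only [Matrix.of_apply, Matrix.smul_apply, smul_eq_mul, RingHom.id_apply]
    split
    · rw [← Finset.mul_sum]; ring
    · ring

/-- `E_η^{⊗n}`: independent depolarization at rate `η` of each of the `n` qubits. -/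
noncomputable def depolarizeN (η : ℝ) (n : ℕ) : QState n →ₗ[ℂ] QState n :=
  (List.finRange n).foldr (fun i acc => depolarizeAt η i ∘ₗ acc) LinearMap.id

/-- `glue A x z` is the bit string on `n` qubits equal to `x` on `A` and `z` outside `A`. -/
def glue {n : ℕ} (A : Finset (Fin n)) (x : A → Fin 2) (z : {i : Fin n // i ∉ A} → Fin 2) :
    Fin n → Fin 2 :=
  fun i => if h : i ∈ A then x ⟨i, h⟩ else z ⟨i, h⟩

/-- `ptr A ρ = ρ|_A`: the partial trace of an `n`-qubit state over all the qubits outside `A`. -/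
noncomputable def ptr {n : ℕ} (A : Finset (Fin n)) (ρ : QState n) :
    Matrix (A → Fin 2) (A → Fin 2) ℂ :=
  Matrix.of fun x y => ∑ z : ({i : Fin n // i ∉ A} → Fin 2), ρ (glue A x z) (glue A y z)

/-- Given a partition of the qubits `[N]` into the fibers of `f : Fin N → Fin w` and matrices
`M ν` on the blocks, `assemble f M` is the tensor product matrix `⊗_ν M ν` on all `N` qubits. -/
def assemble {N w : ℕ} (f : Fin N → Fin w)
    (M : ∀ ν : Fin w,
      Matrix ({i : Fin N // f i = ν} → Fin 2) ({i : Fin N // f i = ν} → Fin 2) ℂ) :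
    QState N :=
  Matrix.of fun x y => ∏ ν : Fin w, M ν (fun j => x j.1) (fun j => y j.1)

/-- `T` decomposes as the tensor product `⊗_ν Tb ν` of quantum gates of fan-in `≤ k`, with
respect to the partitions of the input qubits `[N]` into the fibers `K_ν` of `f` and of the
output qubits `[N']` into the fibers `L_ν` of `g`. -/
def IsGateDecomp {N N' w : ℕ} (k : ℕ) (T : QState N →ₗ[ℂ] QState N')
    (f : Fin N → Fin w) (g : Fin N' → Fin w)
    (Tb : ∀ ν : Fin w,
      Matrix ({i : Fin N // f i = ν} → Fin 2) ({i : Fin N // f i = ν} → Fin 2) ℂ →ₗ[ℂ]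
        Matrix ({i : Fin N' // g i = ν} → Fin 2) ({i : Fin N' // g i = ν} → Fin 2) ℂ) : Prop :=
  (∀ ν, IsQuantumOp (Tb ν)) ∧
  (∀ ν : Fin w, Fintype.card {i : Fin N // f i = ν} ≤ k) ∧
  (∀ M, T (assemble f M) = assemble g fun ν => Tb ν (M ν))

/-- A quantum circuit over the gate set `G_k` of all quantum gates of fan-in `≤ k`:
a sequence of `depth` levels, with `nq i` qubits at level `i`, where each level operation
decomposes as a tensor product of quantum gates of fan-in `≤ k`. -/
structure QCircuit (k : ℕ) where
  depth : ℕ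
  nq : Fin (depth + 1) → ℕ
  op : ∀ i : Fin depth, QState (nq i.castSucc) →ₗ[ℂ] QState (nq i.succ)
  isGate : ∀ i : Fin depth, ∃ (w : ℕ) (f : Fin (nq i.castSucc) → Fin w)
    (g : Fin (nq i.succ) → Fin w)
    (Tb : ∀ ν : Fin w,
      Matrix ({j : Fin (nq i.castSucc) // f j = ν} → Fin 2)
          ({j : Fin (nq i.castSucc) // f j = ν} → Fin 2) ℂ →ₗ[ℂ]
        Matrix ({j : Fin (nq i.succ) // g j = ν} → Fin 2)
          ({j : Fin (nq i.succ) // g j = ν} → Fin 2) ℂ),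
    IsGateDecomp k (op i) f g Tb

/-- The width of a circuit: the maximum number of qubits at any level. -/
def QCircuit.width {k : ℕ} (Q : QCircuit k) : ℕ := Finset.univ.sup Q.nq

/-- The first `i` levels of the perturbed circuit `Q_η`: the gates `T_0, …, T_{i-1}` interlaced
with depolarizing noise at rate `η` on every qubit between consecutive gates. -/
noncomputable def QCircuit.runP {k : ℕ} (Q : QCircuit k) (η : ℝ) :
    (i : ℕ) → (h : i ≤ Q.depth) →
      (QState (Q.nq ⟨0, Nat.succ_pos _⟩) →ₗ[ℂ] QState (Q.nq ⟨i, Nat.lt_succ_of_le h⟩))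
  | 0, _ => LinearMap.id
  | (i + 1), h =>
      Q.op ⟨i, h⟩ ∘ₗ
        (if i = 0 then LinearMap.id
          else depolarizeN η (Q.nq ⟨i, Nat.lt_succ_of_le (Nat.le_of_succ_le h)⟩)) ∘ₗ
        Q.runP η i (Nat.le_of_succ_le h)

/-- The perturbed circuit `Q_η = T_{t-1} ∘ E_η^{⊗n_{t-1}} ∘ ⋯ ∘ E_η^{⊗n_1} ∘ T_0`. -/
noncomputable def QCircuit.perturbed {k : ℕ} (Q : QCircuit k) (η : ℝ) :
    QState (Q.nq ⟨0, Nat.succ_pos _⟩) →ₗ[ℂ] QState (Q.nq (Fin.last Q.depth)) :=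
  Q.runP η Q.depth le_rfl

end

/-!
Split `ρ - σ = A⁺ - A⁻` into its positive and negative parts, so that `‖ρ - σ‖₁ = tr A⁺ + tr A⁻`.
`T` maps `A⁺` and `A⁻` to positive matrices with the same traces, and a difference `X - Y` of
positive matrices has `‖X - Y‖₁ ≤ tr X + tr Y`: indeed `‖B‖₁ = tr (sign B * B)` and
`-1 ≤ sign B ≤ 1`, while `tr (P * Z) ≥ 0` for positive `P` and `Z`.
-/

open Matrix
open scoped MatrixOrder

section

variable {n : Type*} [Fintype n] [DecidableEq n]

namespace Matrix

theorem trace_mul_nonneg {P Q : Matrix n n ℂ} (hP : 0 ≤ P) (hQ : 0 ≤ Q) :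
    0 ≤ (P * Q).trace := by
  have h : 0 ≤ CFC.sqrt P * Q * CFC.sqrt P :=
    (CFC.sqrt_nonneg P).isSelfAdjoint.conjugate_nonneg hQ
  rw [← CFC.sqrt_mul_sqrt_self P, Matrix.mul_assoc, trace_mul_comm, Matrix.mul_assoc]
  simpa [Matrix.mul_assoc] using (nonneg_iff_posSemidef.mp h).trace_nonneg

theorem trace_mul_le_trace_of_le_one {S Z : Matrix n n ℂ} (hS : S ≤ 1) (hZ : 0 ≤ Z) :
    (S * Z).trace ≤ Z.trace := by
  simpa [Matrix.sub_mul, trace_sub] using trace_mul_nonneg (sub_nonneg.mpr hS) hZ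

end Matrix

theorem traceNorm_eq_re_trace_abs (A : Matrix n n ℂ) : traceNorm A = (CFC.abs A).trace.re := by
  have hAA := posSemidef_conjTranspose_mul_self A
  change _ = (CFC.sqrt (Aᴴ * A)).trace.re
  rw [CFC.sqrt_eq_real_sqrt _ hAA.nonneg, cfcₙ_eq_cfc, hAA.1.cfc_eq, IsHermitian.cfc,
    Unitary.conjStarAlgAut_apply]
  rfl

theorem traceNorm_eq_re_trace_posPart_add_negPart {A : Matrix n n ℂ} (hA : IsSelfAdjoint A) :
    traceNorm A = (A⁺).trace.re + (A⁻).trace.re := by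
  rw [traceNorm_eq_re_trace_abs, ← CFC.posPart_add_negPart A, trace_add, Complex.add_re]

theorem traceNorm_eq_re_trace_sign_mul {B : Matrix n n ℂ} (hB : IsSelfAdjoint B) :
    traceNorm B = (cfc Real.sign B * B).trace.re := by
  have hsign : ContinuousOn Real.sign (spectrum ℝ B) := B.finite_real_spectrum.continuousOn _
  have hmul : cfc Real.sign B * B = cfc (fun x => Real.sign x * x) B := by
    rw [cfc_mul .., cfc_id' ℝ B]
  rw [traceNorm_eq_re_trace_abs, CFC.abs_eq_cfc_norm B, hmul]
  refine congrArg (fun M : Matrix n n ℂ => M.trace.re) (cfc_congr fun x _ => ?_)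
  rcases lt_trichotomy x 0 with h | rfl | h
  · simp [Real.sign_of_neg h, abs_of_neg h]
  · simp
  · simp [Real.sign_of_pos h, abs_of_pos h]

theorem traceNorm_sub_le {X Y : Matrix n n ℂ} (hX : 0 ≤ X) (hY : 0 ≤ Y) :
    traceNorm (X - Y) ≤ X.trace.re + Y.trace.re := by
  set S := cfc Real.sign (X - Y)
  have hsign_bound : ∀ x : ℝ, Real.sign x ≤ 1 ∧ -Real.sign x ≤ 1 := fun x => by
    rcases Real.sign_apply_eq x with h | h | h <;> rw [h] <;> norm_num
  have hS : S ≤ 1 := cfc_le_one _ _ fun x _ => (hsign_bound x).1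
  have hnegS : -S ≤ 1 := by
    rw [← cfc_neg]
    exact cfc_le_one _ _ fun x _ => (hsign_bound x).2
  calc traceNorm (X - Y) = (S * X).trace.re + (-S * Y).trace.re := by
        rw [traceNorm_eq_re_trace_sign_mul (hX.isSelfAdjoint.sub hY.isSelfAdjoint),
          Matrix.mul_sub, Matrix.neg_mul, trace_sub, trace_neg, Complex.sub_re, Complex.neg_re,
          sub_eq_add_neg]
    _ ≤ X.trace.re + Y.trace.re := add_le_add
        (Complex.re_le_re (trace_mul_le_trace_of_le_one hS hX))
        (Complex.re_le_re (trace_mul_le_trace_of_le_one hnegS hY))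

end

theorem IsCompletelyPositive.map_nonneg {α β : Type*} [Fintype α] [Fintype β]
    {T : Matrix α α ℂ →ₗ[ℂ] Matrix β β ℂ} (hT : IsCompletelyPositive T)
    {M : Matrix α α ℂ} (hM : 0 ≤ M) : 0 ≤ T M := by
  have h := hT 1 (M.submatrix Prod.fst Prod.fst) ((nonneg_iff_posSemidef.mp hM).submatrix _)
  exact nonneg_iff_posSemidef.mpr (h.submatrix fun b => (b, 0))

theorem traceNorm_map_le_of_nonneg {α β : Type*} [Fintype α] [DecidableEq α]
    [Fintype β] [DecidableEq β] {T : Matrix α α ℂ →ₗ[ℂ] Matrix β β ℂ}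
    (hT_trace : ∀ M, (T M).trace = M.trace) (hT_pos : ∀ M, 0 ≤ M → 0 ≤ T M)
    {A : Matrix α α ℂ} (hA : IsSelfAdjoint A) : traceNorm (T A) ≤ traceNorm A := by
  calc traceNorm (T A) = traceNorm (T A⁺ - T A⁻) := by rw [← map_sub, CFC.posPart_sub_negPart A]
    _ ≤ (T A⁺).trace.re + (T A⁻).trace.re :=
        traceNorm_sub_le (hT_pos _ (CFC.posPart_nonneg A)) (hT_pos _ (CFC.negPart_nonneg A))
    _ = traceNorm A := by rw [hT_trace, hT_trace, traceNorm_eq_re_trace_posPart_add_negPart hA]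

/-- **Proposition `monotone`.** Quantum operations are contractive for the trace distance:
`D(T(ρ), T(σ)) ≤ D(ρ, σ)` for density matrices `ρ, σ` and a quantum operation `T`. -/
theorem traceDist_quantumOp_le {α β : Type*} [Fintype α] [DecidableEq α]
    [Fintype β] [DecidableEq β]
    (T : Matrix α α ℂ →ₗ[ℂ] Matrix β β ℂ) (hT : IsQuantumOp T)
    (ρ σ : Matrix α α ℂ) (hρ : IsDensityMatrix ρ) (hσ : IsDensityMatrix σ) :
    traceDist (T ρ) (T σ) ≤ traceDist ρ σ := by
  have hρσ : IsSelfAdjoint (ρ - σ) := hρ.1.isHermitian.sub hσ.1.isHermitian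
  have h := traceNorm_map_le_of_nonneg hT.1 (fun _ => hT.2.map_nonneg) hρσ
  rw [map_sub] at h
  exact div_le_div_of_nonneg_right h zero_le_two
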